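/- arXiv:math/0609491 — 5 statements merged into one kernel-verified Lean document; each statement's English description precedes it below -/
import Mathlib

section
/- Let X be a normal, first countable, arcwise connected Hausdorff topological space, Y a Hausdorff topological space, and f : X → Y a continuous map that is locally open onto its image and locally fiber connected. If f is a closed map, then the projection π_f : X → X_f is also a closed map. -/
open Set Topology Filter

section TopDefs

variable {X Y : Type*} [TopologicalSpace X] [TopologicalSpace Y]

/-- A subset `A ⊆ X` satisfies the (LFC) condition for `f : X → Y` if `A` does not intersect
two different connected components of the fiber `f ⁻¹ {f x}`, for any `x ∈ A`. -/
def SatisfiesLFC (f : X → Y) (A : Set X) : Prop :=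
  ∀ x ∈ A, ∀ y ∈ A, f y = f x → y ∈ connectedComponentIn (f ⁻¹' {f x}) x

/-- `f` is locally fiber connected if every open neighborhood of every point contains a
connected neighborhood satisfying (LFC). -/
def LocallyFiberConnected (f : X → Y) : Prop :=
  ∀ x : X, ∀ V : Set X, IsOpen V → x ∈ V →
    ∃ U ∈ 𝓝 x, U ⊆ V ∧ IsConnected U ∧ SatisfiesLFC f U

/-- An open set `U` satisfies the (LOI) condition for `f` if the restriction
`f|_U : U → f(U)` is an open map (`f(U)` carrying the subspace topology). -/
def SatisfiesLOI (f : X → Y) (U : Set X) : Prop :=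
  IsOpenMap (fun u : U => (⟨f u, Set.mem_image_of_mem f u.2⟩ : f '' U))

/-- `f` is locally open onto its image if every point has an open neighborhood
satisfying (LOI). -/
def LocallyOpenOntoImage (f : X → Y) : Prop :=
  ∀ x : X, ∃ U : Set X, IsOpen U ∧ x ∈ U ∧ SatisfiesLOI f U

/-- The equivalence relation identifying two points iff they lie in the same connected
component of the same fiber of `f`. -/
def fiberSetoid (f : X → Y) : Setoid X where
  r x y := y ∈ connectedComponentIn (f ⁻¹' {f x}) x
  iseqv := by
    constructor
    · intro x
      exact mem_connectedComponentIn (by simp)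
    · intro x y h
      have hfy : f y = f x := by
        have := connectedComponentIn_subset (f ⁻¹' {f x}) x h
        simpa using this
      have h2 : connectedComponentIn (f ⁻¹' {f x}) x = connectedComponentIn (f ⁻¹' {f x}) y :=
        connectedComponentIn_eq h
      show x ∈ connectedComponentIn (f ⁻¹' {f y}) y
      rw [hfy, ← h2]
      exact mem_connectedComponentIn (by simp)
    · intro x y z hxy hyz
      have hfy : f y = f x := by
        have := connectedComponentIn_subset (f ⁻¹' {f x}) x hxy
        simpa using this
      show z ∈ connectedComponentIn (f ⁻¹' {f x}) x
      have hyz' : z ∈ connectedComponentIn (f ⁻¹' {f x}) y := by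
        rw [← hfy]; exact hyz
      rw [connectedComponentIn_eq hxy]
      exact hyz'

/-- The induced map `f̃ : X_f → Y` with `f̃ ∘ π_f = f`. -/
def ftilde (f : X → Y) : Quotient (fiberSetoid f) → Y :=
  Quotient.lift f (fun x y h => by
    have h' : y ∈ connectedComponentIn (f ⁻¹' {f x}) x := h
    have := connectedComponentIn_subset (f ⁻¹' {f x}) x h'
    simp only [mem_preimage, mem_singleton_iff] at this
    exact this.symm)

end TopDefs

/-- If `f` is a closed map (under the stated hypotheses on `X`, `Y`, `f`),
then the projection `π_f : X → X_f` is also a closed map. -/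
theorem stmt_0 {X Y : Type*} [TopologicalSpace X] [TopologicalSpace Y]
    [NormalSpace X] [FirstCountableTopology X] [PathConnectedSpace X]
    [T2Space X] [T2Space Y]
    (f : X → Y) (hf : Continuous f)
    (hLOI : LocallyOpenOntoImage f) (hLFC : LocallyFiberConnected f)
    (hclosed : IsClosedMap f) :
    IsClosedMap (Quotient.mk (fiberSetoid f)) := by
  intro C hC
  have hquot : IsQuotientMap (Quotient.mk (fiberSetoid f)) := isQuotientMap_quot_mk
  rw [← hquot.isClosed_preimage]
  set π := Quotient.mk (fiberSetoid f) with hπ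
  have hSmem : ∀ a, a ∈ π ⁻¹' (π '' C) ↔
      ∃ c ∈ C, a ∈ connectedComponentIn (f ⁻¹' {f c}) c := by
    intro a
    constructor
    · rintro ⟨c, hcC, hc⟩
      exact ⟨c, hcC, Quotient.exact hc⟩
    · rintro ⟨c, hcC, h⟩
      exact ⟨c, hcC, Quotient.sound h⟩
  apply isClosed_of_closure_subset
  intro y hy
  by_contra hyS
  set F := f ⁻¹' {f y} with hFdef
  have hyF : y ∈ F := by simp [hFdef]
  set K := connectedComponentIn F y with hKdef
  have hyK : y ∈ K := mem_connectedComponentIn hyF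
  have hKF : K ⊆ F := connectedComponentIn_subset _ _
  have hFclosed : IsClosed F := isClosed_singleton.preimage hf
  have hKclosed : IsClosed K := by
    apply isClosed_of_closure_subset
    exact IsPreconnected.subset_connectedComponentIn
      (isPreconnected_connectedComponentIn.closure) (subset_closure hyK)
      ((closure_mono hKF).trans hFclosed.closure_eq.subset)
  -- K is open in F, thanks to LFC
  have hKopen : ∀ a ∈ K, ∃ N ∈ 𝓝 a, N ∩ F ⊆ K := by
    intro a haK
    obtain ⟨N, hN, -, -, hLFCN⟩ := hLFC a Set.univ isOpen_univ (mem_univ a)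
    refine ⟨N, hN, ?_⟩
    rintro b ⟨hbN, hbF⟩
    have hfa : f a = f y := hKF haK
    have hfb : f b = f a := by
      have : f b = f y := hbF
      rw [this, hfa]
    have hba := hLFCN a (mem_of_mem_nhds hN) b hbN hfb
    have hba' : b ∈ connectedComponentIn F a := by rwa [hfa] at hba
    rw [hKdef, connectedComponentIn_eq haK]
    exact hba'
  have hDclosed : IsClosed (F \ K) := by
    apply isClosed_of_closure_subset
    intro z hz
    have hzF : z ∈ F := hFclosed.closure_subset ((closure_mono diff_subset) hz)
    refine ⟨hzF, fun hzK => ?_⟩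
    obtain ⟨N, hN, hNF⟩ := hKopen z hzK
    obtain ⟨w, hwN, hwD⟩ := mem_closure_iff_nhds.1 hz N hN
    exact hwD.2 (hNF ⟨hwN, hwD.1⟩)
  have hKC : Disjoint K ((F \ K) ∪ C) := by
    rw [Set.disjoint_union_right]
    constructor
    · exact Set.disjoint_left.2 fun x hxK hxD => hxD.2 hxK
    · rw [Set.disjoint_left]
      intro x hxK hxC
      apply hyS
      rw [hSmem]
      exact ⟨x, hxC, (fiberSetoid f).iseqv.symm hxK⟩
  obtain ⟨U, W, hUopen, hWopen, hKU, hW, hUW⟩ :=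
    NormalSpace.normal K ((F \ K) ∪ C) hKclosed (hDclosed.union hC) hKC
  set T := (U ∪ W)ᶜ with hTdef
  have hTclosed : IsClosed T := (hUopen.union hWopen).isClosed_compl
  have hFT : F ⊆ U ∪ W := by
    intro a haF
    by_cases haK : a ∈ K
    · exact Or.inl (hKU haK)
    · exact Or.inr (hW (Or.inl ⟨haF, haK⟩))
  have hmem : f y ∈ closure (f '' T) := by
    rw [mem_closure_iff_nhds]
    intro B hB
    have hnhd : f ⁻¹' B ∩ U ∈ 𝓝 y :=
      Filter.inter_mem (hf.continuousAt.preimage_mem_nhds hB) (hUopen.mem_nhds (hKU hyK))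
    obtain ⟨s, hs1, hs2⟩ := mem_closure_iff_nhds.1 hy _ hnhd
    obtain ⟨c, hcC, hsc⟩ := (hSmem s).1 hs2
    have hKcpre : IsPreconnected (connectedComponentIn (f ⁻¹' {f c}) c) :=
      isPreconnected_connectedComponentIn
    have hcKc : c ∈ connectedComponentIn (f ⁻¹' {f c}) c :=
      mem_connectedComponentIn (by simp)
    have hnot : ¬ connectedComponentIn (f ⁻¹' {f c}) c ⊆ U ∪ W := by
      intro hsub
      obtain ⟨w, hwK, hwU, hwW⟩ := hKcpre U W hUopen hWopen hsub
        ⟨s, hsc, hs1.2⟩ ⟨c, hcKc, hW (Or.inr hcC)⟩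
      exact hUW.le_bot ⟨hwU, hwW⟩
    obtain ⟨z, hzKc, hzT⟩ := Set.not_subset.1 hnot
    have hfz : f z = f c := by
      have := connectedComponentIn_subset (f ⁻¹' {f c}) c hzKc
      simpa using this
    have hfs : f s = f c := by
      have := connectedComponentIn_subset (f ⁻¹' {f c}) c hsc
      simpa using this
    refine ⟨f z, ?_, z, hzT, rfl⟩
    rw [hfz, ← hfs]
    exact hs1.1
  have : f y ∈ f '' T := (hclosed T hTclosed).closure_subset hmem
  obtain ⟨z, hzT, hfz⟩ := this
  exact hzT (hFT (show z ∈ F from hfz))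
end

section
/- Let X be a normal, first countable, arcwise connected Hausdorff topological space, Y a Hausdorff topological space, and f : X → Y a continuous map that is locally open onto its image and locally fiber connected. If f is a closed map, then the quotient space X_f is a Hausdorff topological space. -/
open Set Topology Filter

/-- A helper: from disjoint saturated open sets in `X` we get separation in the quotient. -/
lemma sep_of_saturated {X Y : Type*} [TopologicalSpace X] [TopologicalSpace Y]
    (f : X → Y) (x y : X) (P Q : Set X) (hPo : IsOpen P) (hQo : IsOpen Q)
    (hxP : x ∈ P) (hyQ : y ∈ Q) (hdis : ∀ a, a ∈ P → a ∉ Q)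
    (hPs : ∀ a ∈ P, ∀ b, b ∈ connectedComponentIn (f ⁻¹' {f a}) a → b ∈ P)
    (hQs : ∀ a ∈ Q, ∀ b, b ∈ connectedComponentIn (f ⁻¹' {f a}) a → b ∈ Q) :
    ∃ u v : Set (Quotient (fiberSetoid f)), IsOpen u ∧ IsOpen v ∧
      Quotient.mk (fiberSetoid f) x ∈ u ∧ Quotient.mk (fiberSetoid f) y ∈ v ∧ Disjoint u v := by
  have hpre : ∀ (R : Set X), (∀ a ∈ R, ∀ b, b ∈ connectedComponentIn (f ⁻¹' {f a}) a → b ∈ R) →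
      Quotient.mk (fiberSetoid f) ⁻¹' (Quotient.mk (fiberSetoid f) '' R) = R := by
    intro R hRs
    apply Subset.antisymm
    · rintro b hb
      obtain ⟨a, haR, hab⟩ := hb
      have h := Quotient.exact hab
      exact hRs a haR b h
    · intro a ha
      exact ⟨a, ha, rfl⟩
  refine ⟨Quotient.mk (fiberSetoid f) '' P, Quotient.mk (fiberSetoid f) '' Q, ?_, ?_,
    ⟨x, hxP, rfl⟩, ⟨y, hyQ, rfl⟩, ?_⟩
  · rw [isOpen_coinduced (f := Quotient.mk (fiberSetoid f))]
    rw [hpre P hPs]; exact hPo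
  · rw [isOpen_coinduced (f := Quotient.mk (fiberSetoid f))]
    rw [hpre Q hQs]; exact hQo
  · rw [Set.disjoint_left]
    rintro c ⟨a, haP, rfl⟩ ⟨b, hbQ, hba⟩
    have h := Quotient.exact hba.symm
    exact hdis b (hPs a haP b h) hbQ

/-- If `f` is a closed map (under the stated hypotheses on `X`, `Y`, `f`),
then the quotient space `X_f` is Hausdorff. -/
theorem stmt_1 {X Y : Type*} [TopologicalSpace X] [TopologicalSpace Y]
    [NormalSpace X] [FirstCountableTopology X] [PathConnectedSpace X]
    [T2Space X] [T2Space Y]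
    (f : X → Y) (hf : Continuous f)
    (hLOI : LocallyOpenOntoImage f) (hLFC : LocallyFiberConnected f)
    (hclosed : IsClosedMap f) :
    T2Space (Quotient (fiberSetoid f)) := by
  constructor
  intro p q hpq
  obtain ⟨x, rfl⟩ := Quotient.exists_rep p
  obtain ⟨y, rfl⟩ := Quotient.exists_rep q
  by_cases hfy : f y = f x
  · -- x and y are in the same fiber, but different connected components
    set F : Set X := f ⁻¹' {f x} with hF
    set C : Set X := connectedComponentIn F x with hC
    have hxF : x ∈ F := by simp [hF]
    have hyF : y ∈ F := by simp [hF, hfy]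
    have hyC : y ∉ C := fun h => hpq (Quotient.sound h)
    have hFc : IsClosed F := isClosed_singleton.preimage hf
    have hCsub : C ⊆ F := connectedComponentIn_subset F x
    have hxC : x ∈ C := mem_connectedComponentIn hxF
    -- C is closed
    have hCc : IsClosed C := by
      have hcl : closure C ⊆ C := by
        apply IsPreconnected.subset_connectedComponentIn
          (isPreconnected_connectedComponentIn.closure)
          (subset_closure hxC)
        exact hFc.closure_subset_iff.mpr hCsub
      exact isClosed_of_closure_subset hcl
    -- F \ C is closed (C is open in F, by local fiber connectedness)
    have hopen : ∀ w ∈ C, ∃ W ∈ 𝓝 w, W ∩ F ⊆ C := by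
      intro w hwC
      obtain ⟨W, hW, _, _, hLFCW⟩ := hLFC w univ isOpen_univ (mem_univ w)
      refine ⟨W, hW, ?_⟩
      rintro z ⟨hzW, hzF⟩
      have hwW : w ∈ W := mem_of_mem_nhds hW
      have hfw : f w = f x := hCsub hwC
      have hfz : f z = f w := by
        have : f z = f x := hzF
        rw [this, hfw]
      have hz := hLFCW w hwW z hzW hfz
      rw [hfw] at hz
      rw [hC, connectedComponentIn_eq hwC]
      exact hz
    have hDc : IsClosed (F \ C) := by
      rw [← isOpen_compl_iff]
      rw [isOpen_iff_mem_nhds]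
      intro w hw
      by_cases hwF : w ∈ F
      · have hwC : w ∈ C := by
          simp only [mem_compl_iff, mem_diff, not_and, not_not] at hw
          exact hw hwF
        obtain ⟨W, hW, hWsub⟩ := hopen w hwC
        filter_upwards [hW] with z hz
        simp only [mem_compl_iff, mem_diff, not_and, not_not]
        intro hzF
        exact hWsub ⟨hz, hzF⟩
      · filter_upwards [hFc.isOpen_compl.mem_nhds hwF] with z hz
        simp only [mem_compl_iff, mem_diff, not_and]
        intro hzF
        exact absurd hzF hz
    have hdisCD : Disjoint C (F \ C) := disjoint_sdiff_right.mono_left le_rfl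
    -- Urysohn function
    obtain ⟨g, hg0, hg1, hg01⟩ := exists_continuous_zero_one_of_isClosed hCc hDc hdisCD
    set M : Set X := g ⁻¹' {(1:ℝ)/2} with hM
    have hMc : IsClosed M := isClosed_singleton.preimage g.continuous
    have hMF : ∀ z ∈ F, z ∉ M := by
      intro z hzF hzM
      have hgz : g z = 1/2 := hzM
      by_cases hzC : z ∈ C
      · have : g z = 0 := hg0 hzC
        rw [this] at hgz; norm_num at hgz
      · have : g z = 1 := hg1 ⟨hzF, hzC⟩
        rw [this] at hgz; norm_num at hgz
    -- use closedness of f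
    set V : Set Y := (f '' M)ᶜ with hV
    have hVo : IsOpen V := (hclosed M hMc).isOpen_compl
    have hfxV : f x ∈ V := by
      rintro ⟨m, hmM, hfm⟩
      exact hMF m (by simp [hF, hfm]) hmM
    have hVM : ∀ z, f z ∈ V → z ∉ M := by
      intro z hzV hzM
      exact hzV ⟨z, hzM, rfl⟩
    set P : Set X := f ⁻¹' V ∩ g ⁻¹' (Iio ((1:ℝ)/2)) with hP
    set Q : Set X := f ⁻¹' V ∩ g ⁻¹' (Ioi ((1:ℝ)/2)) with hQ
    have hPo : IsOpen P := (hVo.preimage hf).inter (isOpen_Iio.preimage g.continuous)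
    have hQo : IsOpen Q := (hVo.preimage hf).inter (isOpen_Ioi.preimage g.continuous)
    have hxP : x ∈ P := by
      refine ⟨hfxV, ?_⟩
      have : g x = 0 := hg0 hxC
      simp [this]
    have hyQ : y ∈ Q := by
      refine ⟨by rwa [mem_preimage, hfy], ?_⟩
      have : g y = 1 := hg1 ⟨hyF, hyC⟩
      simp [this]; norm_num [this]
    have hdis : ∀ a, a ∈ P → a ∉ Q := by
      rintro a ⟨-, ha1⟩ ⟨-, ha2⟩
      simp only [mem_preimage, mem_Iio] at ha1
      simp only [mem_preimage, mem_Ioi] at ha2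
      exact absurd (lt_trans ha1 ha2) (lt_irrefl _)
    -- saturation
    have hsat : ∀ (R : Set (ℝ)), IsOpen R → (∀ a, a ∈ f ⁻¹' V ∩ g ⁻¹' R → ∀ b,
        b ∈ connectedComponentIn (f ⁻¹' {f a}) a → b ∈ f ⁻¹' V ∩ g ⁻¹' R) ∨ True := fun _ _ => Or.inr trivial
    have hsatgen : ∀ (R R' : Set ℝ), IsOpen R → IsOpen R' → Disjoint R R' →
        (∀ t : ℝ, t ≠ 1/2 → t ∈ R ∪ R') →
        ∀ a ∈ f ⁻¹' V ∩ g ⁻¹' R, ∀ b, b ∈ connectedComponentIn (f ⁻¹' {f a}) a →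
          b ∈ f ⁻¹' V ∩ g ⁻¹' R := by
      intro R R' hRo hR'o hRR' hcov a ⟨haV, haR⟩ b hb
      set K : Set X := connectedComponentIn (f ⁻¹' {f a}) a with hK
      have hKfib : ∀ k ∈ K, f k = f a := by
        intro k hk
        have := connectedComponentIn_subset (f ⁻¹' {f a}) a hk
        simpa using this
      have hKV : ∀ k ∈ K, f k ∈ V := by
        intro k hk; rw [hKfib k hk]; exact haV
      have hKM : ∀ k ∈ K, g k ≠ 1/2 := by
        intro k hk hgk
        exact hVM k (hKV k hk) hgk
      have hKsub : K ⊆ g ⁻¹' R ∪ g ⁻¹' R' := by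
        intro k hk
        rcases hcov (g k) (hKM k hk) with h | h
        · exact Or.inl h
        · exact Or.inr h
      have haK : a ∈ K := mem_connectedComponentIn (by simp)
      have := isPreconnected_connectedComponentIn (x := a) (F := f ⁻¹' {f a})
      rcases this.subset_or_subset (hRo.preimage g.continuous) (hR'o.preimage g.continuous)
        (Set.disjoint_left.2 fun z hz hz' => Set.disjoint_left.1 hRR' hz hz') hKsub with h | h
      · exact ⟨hKV b hb, h hb⟩
      · exact absurd (h haK) (fun hc => Set.disjoint_left.1 hRR' haR hc)
    have hcov : ∀ t : ℝ, t ≠ 1/2 → t ∈ Iio ((1:ℝ)/2) ∪ Ioi ((1:ℝ)/2) := by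
      intro t ht
      rcases lt_or_gt_of_ne ht with h | h
      · exact Or.inl h
      · exact Or.inr h
    have hcov' : ∀ t : ℝ, t ≠ 1/2 → t ∈ Ioi ((1:ℝ)/2) ∪ Iio ((1:ℝ)/2) := by
      intro t ht
      rcases hcov t ht with h | h
      · exact Or.inr h
      · exact Or.inl h
    obtain ⟨u, v, huo, hvo, hxu, hyv, huv⟩ :=
      sep_of_saturated f x y P Q hPo hQo hxP hyQ hdis
        (hsatgen (Iio ((1:ℝ)/2)) (Ioi ((1:ℝ)/2)) isOpen_Iio isOpen_Ioi ((Set.Iic_disjoint_Ioi le_rfl).mono_left Set.Iio_subset_Iic_self) hcov)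
        (hsatgen (Ioi ((1:ℝ)/2)) (Iio ((1:ℝ)/2)) isOpen_Ioi isOpen_Iio ((Set.Iic_disjoint_Ioi le_rfl).mono_left Set.Iio_subset_Iic_self).symm hcov')
    exact ⟨u, v, huo, hvo, hxu, hyv, huv⟩
  · -- different fibers: separate using Y Hausdorff
    obtain ⟨V₁, V₂, hV₁, hV₂, hx1, hy2, h12⟩ := t2_separation (fun h : f x = f y => hfy h.symm)
    have hsat1 : ∀ a ∈ f ⁻¹' V₁, ∀ b, b ∈ connectedComponentIn (f ⁻¹' {f a}) a → b ∈ f ⁻¹' V₁ := by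
      intro a ha b hb
      have hba := connectedComponentIn_subset (f ⁻¹' {f a}) a hb
      simp only [mem_preimage, mem_singleton_iff] at hba
      rw [mem_preimage, hba]; exact ha
    have hsat2 : ∀ a ∈ f ⁻¹' V₂, ∀ b, b ∈ connectedComponentIn (f ⁻¹' {f a}) a → b ∈ f ⁻¹' V₂ := by
      intro a ha b hb
      have hba := connectedComponentIn_subset (f ⁻¹' {f a}) a hb
      simp only [mem_preimage, mem_singleton_iff] at hba
      rw [mem_preimage, hba]; exact ha
    exact sep_of_saturated f x y (f ⁻¹' V₁) (f ⁻¹' V₂) (hV₁.preimage hf) (hV₂.preimage hf)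
      hx1 hy2 (fun a h1 h2 => Set.disjoint_left.1 h12 h1 h2) hsat1 hsat2
end

section
/- Suppose f : X → Y is a continuous map between topological spaces, with X arcwise connected and Hausdorff. If f is locally fiber connected and locally open onto its image, then the projection π_f : X → X_f is an open map. -/
open Set Topology Filter

lemma loi_extract {X Y : Type*} [TopologicalSpace X] [TopologicalSpace Y] {f : X → Y}
    {U O : Set X} (hU : SatisfiesLOI f U) (hO : IsOpen O) (hOU : O ⊆ U) :
    ∃ V₀ : Set Y, IsOpen V₀ ∧ ∀ y ∈ f '' U, (y ∈ V₀ ↔ y ∈ f '' O) := by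
  have hΩ : IsOpen {u : U | (u : X) ∈ O} := hO.preimage continuous_subtype_val
  have himg := hU _ hΩ
  rw [isOpen_induced_iff] at himg
  obtain ⟨V₀, hV₀, hpre⟩ := himg
  refine ⟨V₀, hV₀, fun y hy => ?_⟩
  constructor
  · intro hyV
    have hmem : (⟨y, hy⟩ : f '' U) ∈ Subtype.val ⁻¹' V₀ := hyV
    rw [hpre] at hmem
    obtain ⟨u, hu, hequ⟩ := hmem
    exact ⟨u, hu, congrArg Subtype.val hequ⟩
  · rintro ⟨o, hoO, hfo⟩
    have hmem : (⟨y, hy⟩ : f '' U) ∈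
        (fun u : U => (⟨f u, Set.mem_image_of_mem f u.2⟩ : f '' U)) ''
          {u : U | (u : X) ∈ O} :=
      ⟨⟨o, hOU hoO⟩, hoO, Subtype.ext hfo⟩
    rw [← hpre] at hmem
    exact hmem

/-- Benoist: If `f` is locally fiber connected and locally open onto its image,
then the projection `π_f : X → X_f` is an open map. -/
theorem stmt_3 {X Y : Type*} [TopologicalSpace X] [TopologicalSpace Y]
    [PathConnectedSpace X] [T2Space X]
    (f : X → Y) (hf : Continuous f)
    (hLFC : LocallyFiberConnected f) (hLOI : LocallyOpenOntoImage f) :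
    IsOpenMap (Quotient.mk (fiberSetoid f)) := by
  intro W hW
  rw [isOpen_coinduced]
  set S : Set X := Quotient.mk (fiberSetoid f) ⁻¹' (Quotient.mk (fiberSetoid f) '' W) with hSdef
  have hmemS : ∀ {x : X}, x ∈ S ↔ ∃ w ∈ W, (fiberSetoid f).r w x := by
    intro x
    simp only [hSdef, mem_preimage, mem_image]
    constructor
    · rintro ⟨w, hw, hq⟩
      exact ⟨w, hw, Quotient.exact hq⟩
    · rintro ⟨w, hw, hr⟩
      exact ⟨w, hw, Quotient.sound hr⟩
  have hsat : ∀ {s n : X}, s ∈ S → (fiberSetoid f).r s n → n ∈ S := by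
    intro s n hs hr
    obtain ⟨w, hw, hws⟩ := hmemS.mp hs
    exact hmemS.mpr ⟨w, hw, (fiberSetoid f).trans hws hr⟩
  have hWS : W ⊆ S := fun w hw => hmemS.mpr ⟨w, hw, (fiberSetoid f).refl w⟩
  show IsOpen S
  suffices h : S ⊆ interior S by
    have : S = interior S := Subset.antisymm h interior_subset
    rw [this]; exact isOpen_interior
  intro x hx
  obtain ⟨w, hw, hwx⟩ := hmemS.mp hx
  set C := connectedComponentIn (f ⁻¹' {f w}) w with hCdef
  have hCpre : IsPreconnected C := isPreconnected_connectedComponentIn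
  have hxC : x ∈ C := hwx
  have hwC : w ∈ C := mem_connectedComponentIn (by simp)
  have hCfib : ∀ z ∈ C, f z = f w := by
    intro z hz
    have := connectedComponentIn_subset (f ⁻¹' {f w}) w hz
    simpa using this
  set A := C ∩ interior S with hAdef
  have hwA : w ∈ A := ⟨hwC, interior_maximal hWS hW hw⟩
  have K : ∀ z ∈ C, z ∈ closure A → z ∈ interior S := by
    intro z hzC hzcl
    obtain ⟨U, hUopen, hzU, hULOI⟩ := hLOI z
    obtain ⟨N, hNnhds, hNU, _hNconn, hNLFC⟩ := hLFC z U hUopen hzU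
    have hzintN : z ∈ interior N := mem_interior_iff_mem_nhds.mpr hNnhds
    obtain ⟨z', hz'N, hz'C, hz'S⟩ :
        ∃ z', z' ∈ interior N ∧ z' ∈ C ∧ z' ∈ interior S := by
      rcases mem_closure_iff.mp hzcl (interior N) isOpen_interior hzintN with
        ⟨z', hz'N, hz'C, hz'S⟩
      exact ⟨z', hz'N, hz'C, hz'S⟩
    set O := interior S ∩ interior N with hOdef
    have hOopen : IsOpen O := isOpen_interior.inter isOpen_interior
    have hOU : O ⊆ U := fun o ho => hNU (interior_subset ho.2)
    obtain ⟨V₀, hV₀open, hV₀iff⟩ := loi_extract hULOI hOopen hOU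
    have hz'U : z' ∈ U := hNU (interior_subset hz'N)
    have hzV₀ : f z ∈ V₀ := by
      have hfz : f z = f z' := by rw [hCfib z hzC, hCfib z' hz'C]
      rw [hfz]
      exact (hV₀iff _ ⟨z', hz'U, rfl⟩).mpr ⟨z', ⟨hz'S, hz'N⟩, rfl⟩
    have hMopen : IsOpen (interior N ∩ f ⁻¹' V₀) :=
      isOpen_interior.inter (hV₀open.preimage hf)
    have hzM : z ∈ interior N ∩ f ⁻¹' V₀ := ⟨hzintN, hzV₀⟩
    have hMS : interior N ∩ f ⁻¹' V₀ ⊆ S := by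
      rintro n ⟨hnN, hnV⟩
      have hnN' : n ∈ N := interior_subset hnN
      have hfn : f n ∈ f '' O := (hV₀iff _ ⟨n, hNU hnN', rfl⟩).mp hnV
      obtain ⟨s, hsO, hfs⟩ := hfn
      have hsN : s ∈ N := interior_subset hsO.2
      have hr : (fiberSetoid f).r s n := hNLFC s hsN n hnN' hfs.symm
      exact hsat (interior_subset hsO.1) hr
    exact interior_maximal hMS hMopen hzM
  have hCsub : C ⊆ interior S := by
    have hCuv : C ⊆ interior S ∪ (closure A)ᶜ := by
      intro z hz
      by_cases h : z ∈ closure A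
      · exact Or.inl (K z hz h)
      · exact Or.inr h
    by_cases hv : (C ∩ (closure A)ᶜ).Nonempty
    · exfalso
      obtain ⟨t, htC, htu, htv⟩ := hCpre (interior S) (closure A)ᶜ isOpen_interior
        isClosed_closure.isOpen_compl hCuv ⟨w, hwC, hwA.2⟩ hv
      exact htv (subset_closure ⟨htC, htu⟩)
    · intro z hz
      rcases hCuv hz with h | h
      · exact h
      · exact absurd ⟨z, hz, h⟩ hv
  exact hCsub hxC
end

section
/- Let X be a normal, first countable, arcwise connected Hausdorff topological space and (Y,d) a metric space. Assume f : X → Y is a continuous closed map that is also locally open onto its image and locally fiber connected. Then the function d̃ : X_f × X_f → [0,∞] is a metric on X_f (possibly taking the value ∞): it is symmetric, satisfies the triangle inequality, is nonnegative, and d̃([x],[y]) = 0 implies [x] = [y]; moreover d(f̃([x]), f̃([y])) ≤ d̃([x],[y]) for all [x],[y] ∈ X_f. -/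
open Set Topology Filter

section MetricDefs

open scoped ENNReal

/-- The length of a curve `c` over the parameter set `s`, with respect to an arbitrary
`ℝ≥0∞`-valued distance function `ρ`: the supremum over all partitions of the sums of
consecutive distances. -/
noncomputable def lengthWith {Z : Type*} (ρ : Z → Z → ℝ≥0∞) (c : ℝ → Z) (s : Set ℝ) : ℝ≥0∞ :=
  ⨆ p : ℕ × { u : ℕ → ℝ // Monotone u ∧ ∀ i, u i ∈ s },
    ∑ i ∈ Finset.range p.1, ρ (c (p.2.1 (i + 1))) (c (p.2.1 i))

variable {Y : Type*} [EMetricSpace Y]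

/-- The set of lengths of continuous curves contained in `C` joining `x` to `y`
(the length being computed with respect to the extended distance of `Y`). -/
def pathLengthsIn (C : Set Y) (x y : Y) : Set ℝ≥0∞ :=
  {L | ∃ (a b : ℝ) (c : ℝ → Y), a ≤ b ∧ ContinuousOn c (Set.Icc a b) ∧
      Set.MapsTo c (Set.Icc a b) C ∧ c a = x ∧ c b = y ∧ L = eVariationOn c (Set.Icc a b)}

/-- `(Y, edist)` is a length space: the distance between any two points is the infimum of
the lengths of curves joining them (`∞` if there is no rectifiable such curve). -/
def IsLengthSpace (Y : Type*) [EMetricSpace Y] : Prop :=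
  ∀ x y : Y, edist x y = sInf (pathLengthsIn (Set.univ : Set Y) x y)

/-- A subset `C` of a metric space is convex if the restriction of the distance to `C` is a
finite length metric: distances between points of `C` are finite and realized as the infimum
of lengths of curves contained in `C`. -/
def IsConvexSubset (C : Set Y) : Prop :=
  ∀ x ∈ C, ∀ y ∈ C, edist x y ≠ ⊤ ∧ edist x y = sInf (pathLengthsIn C x y)

/-- A geodesic metric space: a length space in which any two points are joined by a
shortest path. -/
def IsGeodesicSpace (Y : Type*) [EMetricSpace Y] : Prop :=
  IsLengthSpace Y ∧ ∀ x y : Y, ∃ (a b : ℝ) (c : ℝ → Y), a ≤ b ∧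
    ContinuousOn c (Set.Icc a b) ∧ c a = x ∧ c b = y ∧
    eVariationOn c (Set.Icc a b) = edist x y

/-- `c : [a,b] → Y` is a geodesic: it is continuous and each parameter has a neighborhood
(in `[a,b]`) on which the curve is a shortest path. -/
def IsGeodesicCurveOn (c : ℝ → Y) (a b : ℝ) : Prop :=
  a ≤ b ∧ ContinuousOn c (Set.Icc a b) ∧
  ∀ t ∈ Set.Icc a b, ∃ a' b', a' ≤ b' ∧ t ∈ Set.Icc a' b' ∧ Set.Icc a' b' ⊆ Set.Icc a b ∧
    Set.Icc a' b' ∈ 𝓝[Set.Icc a b] t ∧ eVariationOn c (Set.Icc a' b') = edist (c a') (c b')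

/-- A subset `C` is weakly convex if any two of its points are joined by a geodesic
(not necessarily shortest) entirely contained in `C`. -/
def IsWeaklyConvexSubset (C : Set Y) : Prop :=
  ∀ x ∈ C, ∀ y ∈ C, ∃ (a b : ℝ) (c : ℝ → Y), IsGeodesicCurveOn c a b ∧
    c a = x ∧ c b = y ∧ Set.MapsTo c (Set.Icc a b) C

/-- `f` has local convexity data: for each `x` every sufficiently small neighborhood of `x`
has convex image. -/
def HasLocalConvexityData {X : Type*} [TopologicalSpace X] (f : X → Y) : Prop :=
  ∀ x : X, ∃ V ∈ 𝓝 x, ∀ U ∈ 𝓝 x, U ⊆ V → IsConvexSubset (f '' U)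

/-- The function `d̃` on `X_f`: the infimum over all continuous curves `γ` in `X_f`
joining `p` and `q` of the length of `f̃ ∘ γ`. -/
noncomputable def dTilde {X : Type*} [TopologicalSpace X] (f : X → Y)
    (p q : Quotient (fiberSetoid f)) : ℝ≥0∞ :=
  sInf {L | ∃ (a b : ℝ) (γ : ℝ → Quotient (fiberSetoid f)), a ≤ b ∧
    ContinuousOn γ (Set.Icc a b) ∧ γ a = p ∧ γ b = q ∧
    L = eVariationOn (fun t => ftilde f (γ t)) (Set.Icc a b)}

end MetricDefs


section Proof4

open Set

variable {X Y : Type*} [TopologicalSpace X] [EMetricSpace Y]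

private lemma glue_cont {Z : Type*} [TopologicalSpace Z] {g : ℝ → Z} {s t : Set ℝ}
    (hs : IsClosed s) (ht : IsClosed t) (hgs : ContinuousOn g s) (hgt : ContinuousOn g t) :
    ContinuousOn g (s ∪ t) := by
  intro x _
  have h1 : ContinuousWithinAt g s x := by
    by_cases hxs : x ∈ s
    · exact hgs x hxs
    · exact continuousWithinAt_of_notMem_closure (by rwa [hs.closure_eq])
  have h2 : ContinuousWithinAt g t x := by
    by_cases hxt : x ∈ t
    · exact hgt x hxt
    · exact continuousWithinAt_of_notMem_closure (by rwa [ht.closure_eq])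
  exact h1.union h2

private lemma edist_le_dTilde (f : X → Y) (p q : Quotient (fiberSetoid f)) :
    edist (ftilde f p) (ftilde f q) ≤ dTilde f p q := by
  refine le_sInf ?_
  rintro L ⟨a, b, γ, hab, hcont, ha, hb, rfl⟩
  calc edist (ftilde f p) (ftilde f q)
      = edist (ftilde f (γ a)) (ftilde f (γ b)) := by rw [ha, hb]
    _ ≤ eVariationOn (fun t => ftilde f (γ t)) (Set.Icc a b) :=
        eVariationOn.edist_le _ ⟨le_rfl, hab⟩ ⟨hab, le_rfl⟩

private lemma dTilde_symm_le (f : X → Y) (p q : Quotient (fiberSetoid f)) :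
    dTilde f q p ≤ dTilde f p q := by
  refine sInf_le_sInf_of_isCoinitialFor ?_
  rintro L ⟨a, b, γ, hab, hcont, ha, hb, rfl⟩
  refine ⟨eVariationOn (fun t => ftilde f (γ (a + b - t))) (Set.Icc a b),
    ⟨a, b, fun t => γ (a + b - t), hab, ?_, ?_, ?_, rfl⟩, le_of_eq ?_⟩
  · refine hcont.comp ((continuous_const.sub continuous_id).continuousOn) ?_
    intro t ht
    simp only [Set.mem_Icc] at ht ⊢
    constructor <;> linarith [ht.1, ht.2]
  · show γ (a + b - a) = q
    rw [show a + b - a = b by ring, hb]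
  · show γ (a + b - b) = p
    rw [show a + b - b = a by ring, ha]
  · have hanti : AntitoneOn (fun t => a + b - t) (Set.Icc a b) := by
      intro u _ v _ huv
      dsimp only
      linarith
    have := eVariationOn.comp_eq_of_antitoneOn (fun t => ftilde f (γ t))
      (fun t => a + b - t) hanti
    rw [Set.image_const_sub_Icc] at this
    rw [show a + b - b = a by ring, show a + b - a = b by ring] at this
    exact this

private lemma dTilde_triangle (f : X → Y) (p q r : Quotient (fiberSetoid f)) :
    dTilde f p r ≤ dTilde f p q + dTilde f q r := by
  unfold dTilde
  rw [ENNReal.sInf_add]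
  refine le_iInf₂ fun L₁ h₁ => ?_
  rw [add_comm, ENNReal.sInf_add]
  refine le_iInf₂ fun L₂ h₂ => ?_
  rw [add_comm L₂ L₁]
  obtain ⟨a₁, b₁, γ₁, hab₁, hc₁, ha₁, hb₁, rfl⟩ := h₁
  obtain ⟨a₂, b₂, γ₂, hab₂, hc₂, ha₂, hb₂, rfl⟩ := h₂
  have hbB : b₁ ≤ b₁ + (b₂ - a₂) := by linarith
  have haB : a₁ ≤ b₁ + (b₂ - a₂) := by linarith
  set g : ℝ → Quotient (fiberSetoid f) :=
    fun t => if t ≤ b₁ then γ₁ t else γ₂ (t - b₁ + a₂) with hgdef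
  have hge1 : Set.EqOn g γ₁ (Set.Icc a₁ b₁) := fun t ht => if_pos ht.2
  have hge2 : Set.EqOn g (fun t => γ₂ (t - b₁ + a₂)) (Set.Icc b₁ (b₁ + (b₂ - a₂))) := by
    intro t ht
    by_cases h : t ≤ b₁
    · have htb : t = b₁ := le_antisymm h ht.1
      subst htb
      show (if t ≤ t then γ₁ t else _) = γ₂ (t - t + a₂)
      rw [if_pos le_rfl, hb₁, show t - t + a₂ = a₂ by ring, ha₂]
    · exact if_neg h
  have hmaps : Set.MapsTo (fun t => t - b₁ + a₂) (Set.Icc b₁ (b₁ + (b₂ - a₂)))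
      (Set.Icc a₂ b₂) := by
    intro t ht
    simp only [Set.mem_Icc] at ht ⊢
    constructor <;> linarith [ht.1, ht.2]
  have hcg : ContinuousOn g (Set.Icc a₁ (b₁ + (b₂ - a₂))) := by
    rw [← Set.Icc_union_Icc_eq_Icc hab₁ hbB]
    refine glue_cont isClosed_Icc isClosed_Icc (hc₁.congr hge1) ?_
    exact (hc₂.comp (((continuous_id.sub continuous_const).add
      continuous_const).continuousOn) hmaps).congr hge2
  have himg : (fun t => t - b₁ + a₂) '' Set.Icc b₁ (b₁ + (b₂ - a₂)) = Set.Icc a₂ b₂ := by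
    ext s
    constructor
    · rintro ⟨u, hu, rfl⟩
      simp only [Set.mem_Icc] at hu ⊢
      constructor <;> linarith [hu.1, hu.2]
    · intro hs
      simp only [Set.mem_Icc] at hs
      exact ⟨s + b₁ - a₂, ⟨by linarith [hs.1], by linarith [hs.2]⟩, by ring⟩
  have hmono : MonotoneOn (fun t => t - b₁ + a₂) (Set.Icc b₁ (b₁ + (b₂ - a₂))) := by
    intro u _ v _ huv
    dsimp only
    linarith
  have hpiece1 : eVariationOn (fun t => ftilde f (g t)) (Set.Icc a₁ b₁)
      = eVariationOn (fun t => ftilde f (γ₁ t)) (Set.Icc a₁ b₁) :=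
    eVariationOn.eq_of_eqOn (fun t ht => by rw [hge1 ht])
  have hpiece2 : eVariationOn (fun t => ftilde f (g t)) (Set.Icc b₁ (b₁ + (b₂ - a₂)))
      = eVariationOn (fun t => ftilde f (γ₂ t)) (Set.Icc a₂ b₂) := by
    have e1 : eVariationOn (fun t => ftilde f (g t)) (Set.Icc b₁ (b₁ + (b₂ - a₂)))
        = eVariationOn ((fun t => ftilde f (γ₂ t)) ∘ (fun t => t - b₁ + a₂))
          (Set.Icc b₁ (b₁ + (b₂ - a₂))) :=
      eVariationOn.eq_of_eqOn (fun t ht => by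
        show ftilde f (g t) = ftilde f (γ₂ (t - b₁ + a₂))
        rw [hge2 ht])
    rw [e1, eVariationOn.comp_eq_of_monotoneOn _ _ hmono, himg]
  have hsplit := eVariationOn.Icc_add_Icc (fun t => ftilde f (g t)) (s := Set.univ)
    hab₁ hbB (Set.mem_univ b₁)
  simp only [Set.univ_inter] at hsplit
  rw [hpiece1, hpiece2] at hsplit
  refine sInf_le ⟨a₁, b₁ + (b₂ - a₂), g, haB, hcg, ?_, ?_, hsplit⟩
  · show (if a₁ ≤ b₁ then γ₁ a₁ else _) = p
    rw [if_pos hab₁, ha₁]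
  · by_cases hc : b₁ + (b₂ - a₂) ≤ b₁
    · have ha2b2 : b₂ = a₂ := le_antisymm (by linarith) hab₂
      show (if b₁ + (b₂ - a₂) ≤ b₁ then γ₁ (b₁ + (b₂ - a₂)) else _) = r
      rw [if_pos hc, show b₁ + (b₂ - a₂) = b₁ by rw [ha2b2]; ring, hb₁,
        ← hb₂, ha2b2, ha₂]
    · show (if b₁ + (b₂ - a₂) ≤ b₁ then _ else γ₂ (b₁ + (b₂ - a₂) - b₁ + a₂)) = r
      rw [if_neg hc, show b₁ + (b₂ - a₂) - b₁ + a₂ = b₂ by ring, hb₂]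

private lemma dTilde_self (f : X → Y) (p : Quotient (fiberSetoid f)) : dTilde f p p = 0 := by
  refine le_antisymm (sInf_le ?_) zero_le
  refine ⟨0, 0, fun _ => p, le_rfl, continuousOn_const, rfl, rfl, ?_⟩
  refine (eVariationOn.subsingleton _ ?_).symm
  rw [Set.Icc_self]
  exact Set.subsingleton_singleton

private lemma dTilde_eq_zero_imp [NormalSpace X] {f : X → Y} (hf : Continuous f)
    (hclosed : IsClosedMap f) (hLFC : LocallyFiberConnected f)
    {p q : Quotient (fiberSetoid f)} (h0 : dTilde f p q = 0) : p = q := by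
  obtain ⟨x, rfl⟩ := Quotient.exists_rep p
  obtain ⟨y, rfl⟩ := Quotient.exists_rep q
  by_contra hpq
  have hfyx : f y = f x := by
    have h1 := edist_le_dTilde f (Quotient.mk (fiberSetoid f) x) (Quotient.mk (fiberSetoid f) y)
    rw [h0] at h1
    have h2 : edist (f x) (f y) = 0 := le_antisymm h1 zero_le
    exact (edist_eq_zero.1 h2).symm
  have hxF : x ∈ f ⁻¹' {f x} := rfl
  have hxC : x ∈ connectedComponentIn (f ⁻¹' {f x}) x := mem_connectedComponentIn hxF
  have hyF : y ∈ f ⁻¹' {f x} := hfyx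
  have hyC : y ∉ connectedComponentIn (f ⁻¹' {f x}) x := fun h => hpq (Quotient.sound h)
  have hFc : IsClosed (f ⁻¹' {f x} : Set X) := isClosed_singleton.preimage hf
  have hCc : IsClosed (connectedComponentIn (f ⁻¹' {f x}) x) := by
    rw [connectedComponentIn_eq_image hxF]
    exact hFc.isClosedEmbedding_subtypeVal.isClosedMap _ isClosed_connectedComponent
  have hFCc : IsClosed (f ⁻¹' {f x} \ connectedComponentIn (f ⁻¹' {f x}) x) := by
    apply isClosed_of_closure_subset
    intro w hw
    have hwF : w ∈ f ⁻¹' {f x} := hFc.closure_subset (closure_mono diff_subset hw)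
    refine ⟨hwF, fun hwC => ?_⟩
    obtain ⟨U, hU, -, -, hULFC⟩ := hLFC w univ isOpen_univ (mem_univ w)
    obtain ⟨v, hvU, hvF, hvC⟩ : ∃ v, v ∈ U ∧ v ∈ f ⁻¹' {f x} ∧
        v ∉ connectedComponentIn (f ⁻¹' {f x}) x := by
      rcases mem_closure_iff_nhds.1 hw U hU with ⟨v, hvU, hvFC⟩
      exact ⟨v, hvU, hvFC.1, hvFC.2⟩
    have hwU : w ∈ U := mem_of_mem_nhds hU
    have hfw : f w = f x := hwF
    have hv' : v ∈ connectedComponentIn (f ⁻¹' {f w}) w :=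
      hULFC w hwU v hvU (by rw [hfw]; exact hvF)
    rw [hfw] at hv'
    have heq := connectedComponentIn_eq hwC
    rw [← heq] at hv'
    exact hvC hv'
  obtain ⟨A₁, B₁, hA₁o, hB₁o, hCA, hFCB, hAB⟩ :=
    normal_separation hCc hFCc disjoint_sdiff_self_right
  have hKc : IsClosed ((A₁ ∪ B₁)ᶜ : Set X) := (hA₁o.union hB₁o).isClosed_compl
  have hxK : f x ∉ f '' (A₁ ∪ B₁)ᶜ := by
    rintro ⟨k, hkK, hfk⟩
    have hkF : k ∈ f ⁻¹' {f x} := hfk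
    rcases em (k ∈ connectedComponentIn (f ⁻¹' {f x}) x) with h | h
    · exact hkK (Or.inl (hCA h))
    · exact hkK (Or.inr (hFCB ⟨hkF, h⟩))
  obtain ⟨δ, hδ0, hball⟩ := EMetric.mem_nhds_iff.1
    (((hclosed _ hKc).isOpen_compl).mem_nhds hxK)
  have hpreb : f ⁻¹' EMetric.ball (f x) δ ⊆ A₁ ∪ B₁ := by
    intro z hz
    by_contra h
    exact hball hz ⟨z, h, rfl⟩
  have hsat : ∀ (A B' : Set X), IsOpen A → IsOpen B' → Disjoint A B' →
      (f ⁻¹' EMetric.ball (f x) δ ⊆ A ∪ B') →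
      ∀ z ∈ A ∩ f ⁻¹' EMetric.ball (f x) δ, ∀ w, (fiberSetoid f).r z w →
        w ∈ A ∩ f ⁻¹' EMetric.ball (f x) δ := by
    rintro A B' hAo hBo hd hsub z ⟨hzA, hzb⟩ w hw
    have hsubset : connectedComponentIn (f ⁻¹' {f z}) z ⊆ A := by
      refine IsPreconnected.subset_left_of_subset_union hAo hBo hd ?_
        ⟨z, mem_connectedComponentIn rfl, hzA⟩ isPreconnected_connectedComponentIn
      intro u hu
      have hfu : f u = f z := connectedComponentIn_subset (f ⁻¹' {f z}) z hu
      refine hsub (show f u ∈ EMetric.ball (f x) δ by rw [hfu]; exact hzb)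
    have hfw : f w = f z := connectedComponentIn_subset (f ⁻¹' {f z}) z hw
    exact ⟨hsubset hw, show f w ∈ EMetric.ball (f x) δ by rw [hfw]; exact hzb⟩
  have hsat₀ := hsat A₁ B₁ hA₁o hB₁o hAB hpreb
  have hsat₁ := hsat B₁ A₁ hB₁o hA₁o hAB.symm (by rwa [Set.union_comm])
  have hxV : x ∈ A₁ ∩ f ⁻¹' EMetric.ball (f x) δ :=
    ⟨hCA hxC, show f x ∈ _ from EMetric.mem_ball_self hδ0⟩
  have hyV : y ∈ B₁ ∩ f ⁻¹' EMetric.ball (f x) δ :=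
    ⟨hFCB ⟨hyF, hyC⟩, show f y ∈ _ by rw [hfyx]; exact EMetric.mem_ball_self hδ0⟩
  have hPo : ∀ (A : Set X), IsOpen A →
      (∀ z ∈ A ∩ f ⁻¹' EMetric.ball (f x) δ, ∀ w, (fiberSetoid f).r z w →
        w ∈ A ∩ f ⁻¹' EMetric.ball (f x) δ) →
      IsOpen (Quotient.mk (fiberSetoid f) '' (A ∩ f ⁻¹' EMetric.ball (f x) δ)) := by
    intro A hAo hsatA
    have hpre : (@Quotient.mk' X (fiberSetoid f)) ⁻¹'
        (Quotient.mk (fiberSetoid f) '' (A ∩ f ⁻¹' EMetric.ball (f x) δ))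
        = A ∩ f ⁻¹' EMetric.ball (f x) δ := by
      apply Set.Subset.antisymm
      · rintro z ⟨v, hv, hvz⟩
        exact hsatA v hv z (Quotient.exact hvz)
      · intro z hz
        exact ⟨z, hz, rfl⟩
    have : IsOpen ((@Quotient.mk' X (fiberSetoid f)) ⁻¹'
        (Quotient.mk (fiberSetoid f) '' (A ∩ f ⁻¹' EMetric.ball (f x) δ))) := by
      rw [hpre]
      exact hAo.inter (EMetric.isOpen_ball.preimage hf)
    exact (isQuotientMap_quotient_mk' (s := fiberSetoid f)).isOpen_preimage.1 this
  have hP₀o := hPo A₁ hA₁o hsat₀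
  have hP₁o := hPo B₁ hB₁o hsat₁
  have hdisjP : Disjoint (Quotient.mk (fiberSetoid f) '' (A₁ ∩ f ⁻¹' EMetric.ball (f x) δ))
      (Quotient.mk (fiberSetoid f) '' (B₁ ∩ f ⁻¹' EMetric.ball (f x) δ)) := by
    rw [Set.disjoint_left]
    rintro _ ⟨v₀, hv₀, rfl⟩ ⟨v₁, hv₁, e⟩
    have hmem := hsat₀ v₀ hv₀ v₁ (Quotient.exact e.symm)
    exact hAB.ne_of_mem hmem.1 hv₁.1 rfl
  have hlt : dTilde f (Quotient.mk (fiberSetoid f) x) (Quotient.mk (fiberSetoid f) y) < δ := by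
    rw [h0]; exact hδ0
  obtain ⟨L, hL, hLδ⟩ := sInf_lt_iff.1 hlt
  obtain ⟨a, b, γ, hab, hcont, hγa, hγb, rfl⟩ := hL
  have himg : ∀ t ∈ Set.Icc a b, edist (ftilde f (γ t)) (f x) < δ := by
    intro t ht
    have h1 : edist (ftilde f (γ a)) (ftilde f (γ t))
        ≤ eVariationOn (fun u => ftilde f (γ u)) (Set.Icc a b) :=
      eVariationOn.edist_le _ ⟨le_rfl, hab⟩ ht
    calc edist (ftilde f (γ t)) (f x) = edist (ftilde f (γ a)) (ftilde f (γ t)) := by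
          rw [hγa]
          exact edist_comm _ _
      _ ≤ eVariationOn (fun u => ftilde f (γ u)) (Set.Icc a b) := h1
      _ < δ := hLδ
  have hsub2 : γ '' Set.Icc a b ⊆
      (Quotient.mk (fiberSetoid f) '' (A₁ ∩ f ⁻¹' EMetric.ball (f x) δ))
      ∪ (Quotient.mk (fiberSetoid f) '' (B₁ ∩ f ⁻¹' EMetric.ball (f x) δ)) := by
    rintro _ ⟨t, ht, rfl⟩
    obtain ⟨z, hz⟩ := Quotient.exists_rep (γ t)
    have hfz : f z ∈ EMetric.ball (f x) δ := by
      have he : ftilde f (γ t) = f z := by rw [← hz]; rfl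
      have := himg t ht
      rw [he] at this
      exact this
    rcases hpreb hfz with hA | hB
    · exact Or.inl ⟨z, ⟨hA, hfz⟩, hz⟩
    · exact Or.inr ⟨z, ⟨hB, hfz⟩, hz⟩
  have hconn : IsPreconnected (γ '' Set.Icc a b) := isPreconnected_Icc.image γ hcont
  have hfinal : γ '' Set.Icc a b ⊆
      Quotient.mk (fiberSetoid f) '' (A₁ ∩ f ⁻¹' EMetric.ball (f x) δ) := by
    refine hconn.subset_left_of_subset_union hP₀o hP₁o hdisjP hsub2 ?_
    exact ⟨γ a, ⟨a, ⟨le_rfl, hab⟩, rfl⟩, by rw [hγa]; exact ⟨x, hxV, rfl⟩⟩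
  have hbP₀ : γ b ∈ Quotient.mk (fiberSetoid f) '' (A₁ ∩ f ⁻¹' EMetric.ball (f x) δ) :=
    hfinal ⟨b, ⟨hab, le_rfl⟩, rfl⟩
  have hbP₁ : γ b ∈ Quotient.mk (fiberSetoid f) '' (B₁ ∩ f ⁻¹' EMetric.ball (f x) δ) := by
    rw [hγb]
    exact ⟨y, hyV, rfl⟩
  exact Set.disjoint_left.1 hdisjP hbP₀ hbP₁

end Proof4

/-- `d̃` is a (possibly infinite-valued) metric on `X_f`, and
`d(f̃ p, f̃ q) ≤ d̃ p q`. -/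
theorem stmt_4 {X Y : Type*} [TopologicalSpace X] [EMetricSpace Y]
    [NormalSpace X] [FirstCountableTopology X] [PathConnectedSpace X] [T2Space X]
    (f : X → Y) (hf : Continuous f) (hclosed : IsClosedMap f)
    (hLOI : LocallyOpenOntoImage f) (hLFC : LocallyFiberConnected f) :
    (∀ p q, dTilde f p q = dTilde f q p) ∧
    (∀ p q r, dTilde f p r ≤ dTilde f p q + dTilde f q r) ∧
    (∀ p, dTilde f p p = 0) ∧
    (∀ p q, dTilde f p q = 0 → p = q) ∧
    (∀ p q, edist (ftilde f p) (ftilde f q) ≤ dTilde f p q) := by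
  refine ⟨fun p q => le_antisymm (dTilde_symm_le f q p) (dTilde_symm_le f p q),
    dTilde_triangle f, dTilde_self f,
    fun p q h0 => dTilde_eq_zero_imp hf hclosed hLFC h0,
    edist_le_dTilde f⟩
end

section
/- Let X be a normal, first countable, arcwise connected Hausdorff topological space and (Y,d) a geodesic metric space. Assume f : X → Y is a continuous closed map that is also locally open onto its image, locally fiber connected, and has local convexity data. If U ⊆ X is an open set satisfying conditions (LFC) and (LOI) and whose image f(U) is a convex subset of Y, then for all [x],[y] ∈ π_f(U) one has d̃([x],[y]) = d(f̃([x]), f̃([y])); consequently the restriction of f̃ to π_f(U) is an isometry from (π_f(U), d̃) onto (f(U), d). -/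
open Set Topology Filter

/-- on the saturation `π_f(U)` of an open set `U` satisfying (LFC) and (LOI)
with convex image, `d̃` coincides with the distance of the images under `f̃`; consequently
`f̃` restricted to `π_f(U)` is an isometry onto `(f(U), d)`. -/
theorem stmt_5 {X Y : Type*} [TopologicalSpace X] [EMetricSpace Y]
    [NormalSpace X] [FirstCountableTopology X] [PathConnectedSpace X] [T2Space X]
    (f : X → Y) (hf : Continuous f) (hclosed : IsClosedMap f)
    (hLOI : LocallyOpenOntoImage f) (hLFC : LocallyFiberConnected f)
    (hLCD : HasLocalConvexityData f) (hY : IsGeodesicSpace Y)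
    (U : Set X) (hU : IsOpen U) (hUlfc : SatisfiesLFC f U) (hUloi : SatisfiesLOI f U)
    (hUconv : IsConvexSubset (f '' U)) :
    (∀ p ∈ Quotient.mk (fiberSetoid f) '' U, ∀ q ∈ Quotient.mk (fiberSetoid f) '' U,
        dTilde f p q = edist (ftilde f p) (ftilde f q)) ∧
    Set.InjOn (ftilde f) (Quotient.mk (fiberSetoid f) '' U) ∧
    ftilde f '' (Quotient.mk (fiberSetoid f) '' U) = f '' U := by
  classical
  -- a section of f over f '' U with values in U
  choose sec hsecU hsecf using fun y : ↥(f '' U) => y.2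
  -- the inverse map h : f '' U → X_f
  set h : ↥(f '' U) → Quotient (fiberSetoid f) := fun y => Quotient.mk _ (sec y) with hh
  have hkey : ∀ x : X, ∀ hx : x ∈ U,
      h ⟨f x, Set.mem_image_of_mem f hx⟩ = Quotient.mk (fiberSetoid f) x := by
    intro x hx
    exact Quot.sound (hUlfc (sec ⟨f x, Set.mem_image_of_mem f hx⟩) (hsecU _) x hx
      ((hsecf ⟨f x, Set.mem_image_of_mem f hx⟩).symm))
  -- f restricted to U is a quotient map onto its image
  have hq : IsQuotientMap (fun u : U => (⟨f u, Set.mem_image_of_mem f u.2⟩ : ↥(f '' U))) :=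
    hUloi.isQuotientMap ((hf.comp continuous_subtype_val).subtype_mk _)
      (by rintro ⟨y, x, hx, rfl⟩; exact ⟨⟨x, hx⟩, rfl⟩)
  have hhcont : Continuous h := by
    rw [hq.continuous_iff]
    have : (h ∘ fun u : U => (⟨f u, Set.mem_image_of_mem f u.2⟩ : ↥(f '' U))) =
        fun u : U => Quotient.mk (fiberSetoid f) u.1 := by
      funext u; exact hkey u.1 u.2
    rw [this]
    exact continuous_quot_mk.comp continuous_subtype_val
  refine ⟨?_, ?_, ?_⟩
  · rintro p ⟨x, hx, rfl⟩ q ⟨y, hy, rfl⟩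
    obtain ⟨hne, heq⟩ :=
      hUconv (f x) (Set.mem_image_of_mem f hx) (f y) (Set.mem_image_of_mem f hy)
    refine le_antisymm ?_ ?_
    · -- dTilde ≤ edist, via lifting curves in f '' U
      refine le_trans (le_sInf ?_) heq.ge
      rintro L ⟨a, b, c, hab, hc, hmaps, hca, hcb, rfl⟩
      have hprmem : ∀ t : ℝ, ((Set.projIcc a b hab t : ℝ)) ∈ Set.Icc a b :=
        fun t => (Set.projIcc a b hab t).2
      set c' : ℝ → ↥(f '' U) :=
        fun t => ⟨c (Set.projIcc a b hab t : ℝ), hmaps (hprmem t)⟩ with hc'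
      set γ : ℝ → Quotient (fiberSetoid f) := fun t => h (c' t) with hγ
      have hprt : ∀ t ∈ Set.Icc a b, ((Set.projIcc a b hab t : ℝ)) = t :=
        fun t ht => congrArg Subtype.val (Set.projIcc_of_mem hab ht)
      have hγcont : ContinuousOn γ (Set.Icc a b) := by
        refine hhcont.comp_continuousOn ?_
        rw [IsInducing.subtypeVal.continuousOn_iff]
        exact hc.comp ((continuous_subtype_val.comp continuous_projIcc).continuousOn)
          (fun t _ => hprmem t)
      have heqOn : Set.EqOn (fun t => ftilde f (γ t)) c (Set.Icc a b) := by
        intro t ht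
        show f (sec (c' t)) = c t
        rw [hsecf]
        exact congrArg c (hprt t ht)
      have hend : ∀ t ∈ Set.Icc a b, ∀ z : X, ∀ hz : z ∈ U, c t = f z →
          γ t = Quotient.mk (fiberSetoid f) z := by
        intro t ht z hz hcz
        have h1 : c' t = ⟨f z, Set.mem_image_of_mem f hz⟩ := by
          apply Subtype.ext
          show c (Set.projIcc a b hab t : ℝ) = f z
          rw [hprt t ht]; exact hcz
        calc γ t = h ⟨f z, Set.mem_image_of_mem f hz⟩ := congrArg h h1
          _ = Quotient.mk (fiberSetoid f) z := hkey z hz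
      refine sInf_le ⟨a, b, γ, hab, hγcont,
        hend a ⟨le_rfl, hab⟩ x hx hca, hend b ⟨hab, le_rfl⟩ y hy hcb, ?_⟩
      exact (eVariationOn.eq_of_eqOn heqOn).symm
    · -- edist ≤ dTilde
      refine le_sInf ?_
      rintro L ⟨a, b, γ, hab, hγ, hγa, hγb, rfl⟩
      have := eVariationOn.edist_le (fun t => ftilde f (γ t))
        (Set.left_mem_Icc.2 hab) (Set.right_mem_Icc.2 hab)
      simpa [hγa, hγb] using this
  · rintro p ⟨x, hx, rfl⟩ q ⟨y, hy, rfl⟩ hpq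
    exact Quot.sound (hUlfc x hx y hy (show f y = f x from hpq.symm))
  · rw [← Set.image_comp]
    rfl
end
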